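/- arXiv:2110.05540 — 4 statements merged into one kernel-verified Lean document; each statement's English description precedes it below -/
import Mathlib

section
/- For all natural numbers n and k, if n ≤ 2^(2^k), then applying the natural-number square root function k times to n yields a value at most 2; i.e., Nat.sqrt iterated k times on n is ≤ 2. (This is the upper bound on the depth of an ideal Interpolation Search Tree of size n: the node sizes go n, √n, n^(1/4), …, so after ⌈log₂ log₂ n⌉ levels of taking square roots the subtree size is constant.) -/
theorem ist_depth_upper_bound (n k : ℕ) (h : n ≤ 2 ^ (2 ^ k)) :
    Nat.sqrt^[k] n ≤ 2 := by
  induction k generalizing n with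
  | zero => simpa using h
  | succ k ih =>
    rw [Function.iterate_succ_apply]
    apply ih
    have h2 : n ≤ (2 ^ 2 ^ k) ^ 2 := by
      rw [← pow_mul]; simpa [pow_succ, mul_comm] using h
    calc Nat.sqrt n ≤ Nat.sqrt ((2 ^ 2 ^ k) ^ 2) := Nat.sqrt_le_sqrt h2
      _ = 2 ^ 2 ^ k := Nat.sqrt_eq' _
end

section
/- For all natural numbers n and k, if 2^(2^k) ≤ n, then applying the natural-number square root function k times to n yields a value at least 2. (Together with the matching upper bound this shows the depth of an ideal Interpolation Search Tree of size n is Θ(log log n).) -/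
theorem ist_depth_lower_bound (n k : ℕ) (h : 2 ^ (2 ^ k) ≤ n) :
    2 ≤ Nat.sqrt^[k] n := by
  induction k generalizing n with
  | zero => simpa using h
  | succ k ih =>
    rw [Function.iterate_succ_apply]
    apply ih
    have h1 : 2 ^ 2 ^ k = Nat.sqrt (2 ^ 2 ^ (k + 1)) := by
      rw [pow_succ, pow_mul]
      exact (Nat.sqrt_eq' _).symm
    rw [h1]
    exact Nat.sqrt_le_sqrt h
end

section
/- For every natural number n ≥ 2, applying the integer square root Nat.clog 2 (Nat.clog 2 n) times to n yields a value at most 2. That is, the depth at which subtree sizes of an ideal IST of size n become constant is at most ⌈log₂ ⌈log₂ n⌉⌉, giving the O(log log n) depth bound of Theorem 1. -/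
lemma sqrt_iter_aux : ∀ k m : ℕ, m ≤ 2 ^ (2 ^ k) → Nat.sqrt^[k] m ≤ 2 := by
  intro k
  induction k with
  | zero => intro m hm; simpa using hm
  | succ k ih =>
    intro m hm
    rw [Function.iterate_succ_apply]
    apply ih
    calc Nat.sqrt m ≤ Nat.sqrt (2 ^ (2 ^ (k + 1))) := Nat.sqrt_le_sqrt hm
      _ = 2 ^ (2 ^ k) := by
        have : 2 ^ (2 ^ (k + 1)) = (2 ^ (2 ^ k)) * (2 ^ (2 ^ k)) := by ring
        rw [this]; exact Nat.sqrt_eq _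

theorem ist_depth_clog_bound (n : ℕ) (h : 2 ≤ n) :
    Nat.sqrt^[Nat.clog 2 (Nat.clog 2 n)] n ≤ 2 := by
  apply sqrt_iter_aux
  calc n ≤ 2 ^ Nat.clog 2 n := Nat.le_pow_clog one_lt_two n
    _ ≤ 2 ^ 2 ^ Nat.clog 2 (Nat.clog 2 n) :=
      Nat.pow_le_pow_right (by norm_num) (Nat.le_pow_clog one_lt_two _)
end

section
/- Let x ≥ 2 be a real number and k a natural number such that 2 ≤ x^(2^{−k}) (real power). Then ∑_{i=0}^{k} x^(1 − 2^{−i}) ≤ x. (This bounds the total number of tree nodes of an ideal Interpolation Search Tree of size x summed over all k+1 levels by x, giving the linear space and linear construction-time bound of Theorem 1.) -/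
/-! Write `y = x ^ (2 ^ k)⁻¹ ≥ 2`. For `i ≤ k` we have `x ^ (2 ^ i)⁻¹ = y ^ 2 ^ (k - i) ≥ 2 ^ (k + 1 - i)`,
so the `i`-th term `x ^ (1 - (2 ^ i)⁻¹) = x / x ^ (2 ^ i)⁻¹` is at most `x * 2 ^ i / 2 ^ (k + 1)`,
and the geometric sum `∑_{i ≤ k} 2 ^ i < 2 ^ (k + 1)` finishes the bound. -/

lemma rpow_inv_two_pow_eq_pow {x : ℝ} (hx : 0 ≤ x) (i n : ℕ) :
    x ^ ((2 : ℝ) ^ i)⁻¹ = (x ^ ((2 : ℝ) ^ (i + n))⁻¹) ^ 2 ^ n := by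
  rw [← Real.rpow_natCast (x ^ _) (2 ^ n), ← Real.rpow_mul hx, pow_add]
  push_cast
  field_simp

lemma two_pow_succ_le_pow_two_pow {y : ℝ} (hy : 2 ≤ y) (n : ℕ) : (2 : ℝ) ^ (n + 1) ≤ y ^ 2 ^ n :=
  calc (2 : ℝ) ^ (n + 1) ≤ 2 ^ 2 ^ n := pow_le_pow_right₀ one_le_two n.lt_two_pow_self
    _ ≤ y ^ 2 ^ n := pow_le_pow_left₀ zero_le_two hy _

lemma rpow_one_sub_inv_two_pow_le {x : ℝ} (hx : 0 < x) {i k : ℕ} (hik : i ≤ k)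
    (hk : 2 ≤ x ^ ((2 : ℝ) ^ k)⁻¹) :
    x ^ (1 - ((2 : ℝ) ^ i)⁻¹) ≤ x * 2 ^ i / 2 ^ (k + 1) := by
  obtain ⟨n, rfl⟩ := Nat.exists_eq_add_of_le hik
  have hroot : (2 : ℝ) ^ (n + 1) ≤ x ^ ((2 : ℝ) ^ i)⁻¹ := by
    rw [rpow_inv_two_pow_eq_pow hx.le i n]
    exact two_pow_succ_le_pow_two_pow hk n
  calc x ^ (1 - ((2 : ℝ) ^ i)⁻¹) = x / x ^ ((2 : ℝ) ^ i)⁻¹ := by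
        rw [Real.rpow_sub hx, Real.rpow_one]
    _ ≤ x / 2 ^ (n + 1) := div_le_div_of_nonneg_left hx.le (by positivity) hroot
    _ = x * 2 ^ i / 2 ^ (i + n + 1) := by
        field_simp
        ring

lemma sum_range_two_pow_le (m : ℕ) : ∑ i ∈ Finset.range m, (2 : ℝ) ^ i ≤ 2 ^ m := by
  exact_mod_cast (Nat.geomSum_lt le_rfl fun i hi => Finset.mem_range.mp hi).le

theorem ist_total_nodes_le (x : ℝ) (k : ℕ) (hx : 2 ≤ x)
    (hk : 2 ≤ x ^ (((2 : ℝ) ^ k)⁻¹)) :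
    ∑ i ∈ Finset.range (k + 1), x ^ (1 - ((2 : ℝ) ^ i)⁻¹) ≤ x := by
  have hx0 : 0 < x := by linarith
  calc ∑ i ∈ Finset.range (k + 1), x ^ (1 - ((2 : ℝ) ^ i)⁻¹)
      ≤ ∑ i ∈ Finset.range (k + 1), x * 2 ^ i / 2 ^ (k + 1) :=
        Finset.sum_le_sum fun i hi =>
          rpow_one_sub_inv_two_pow_le hx0 (Nat.lt_succ_iff.mp (Finset.mem_range.mp hi)) hk
    _ = x * (∑ i ∈ Finset.range (k + 1), (2 : ℝ) ^ i) / 2 ^ (k + 1) := by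
        rw [Finset.mul_sum, Finset.sum_div]
    _ ≤ x * 2 ^ (k + 1) / 2 ^ (k + 1) := by
        gcongr
        exact sum_range_two_pow_le (k + 1)
    _ = x := by field_simp
end
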